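/- Let u, s ∈ ℂ with s² ≠ (u−1)². Define the 4×4 matrix M(x) = α(x)·E₁₂ + β(x)·E₁₃ + γ(x)·E₂₄ + δ(x)·E₃₄ with α(x) = s² − x − 3/4, β(x) = (2x+1)²/4, γ(x) = (2x−1)²/4, and δ(x) = s² + x − 3/4. Then for k ∈ ℂ the matrix K = I₄ + k·(−E₂₂ + E₂₃ + E₃₂ − E₃₃) satisfies M(−u)·K = K·M(u) if and only if k = 2u/(s² − (u−1)²). -/

import Mathlib

open Matrix

/-- The represented coproduct of the level-two twisted Yangian generator of
`Y(sl(2), sl(2))` at `t = −2`. -/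
noncomputable def Mty (s x : ℂ) : Matrix (Fin 4) (Fin 4) ℂ :=
  !![0, s ^ 2 - x - 3 / 4, (2 * x + 1) ^ 2 / 4, 0;
     0, 0, 0, (2 * x - 1) ^ 2 / 4;
     0, 0, 0, s ^ 2 + x - 3 / 4;
     0, 0, 0, 0]

/-!
Write `K = 1 + k • P`. The odd part of `x ↦ M(x)` is `-x • N` with `N = E₁₂ - E₁₃ + E₂₄ - E₃₄`,
so `M(-u) - M(u) = 2u • N`, and a direct computation gives
`M(-u) P - P M(u) = ((u - 1)² - s²) • N`. Since `N ≠ 0`, the equation `M(-u) K = K M(u)`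
reduces to the scalar equation `2u + k((u - 1)² - s²) = 0`.
-/

theorem mul_one_add_smul_eq_one_add_smul_mul_iff {R S : Type*} [CommRing R] [Ring S]
    [Algebra R S] (A B P : S) (k : R) :
    A * (1 + k • P) = (1 + k • P) * B ↔ A - B + k • (A * P - P * B) = 0 := by
  rw [← sub_eq_zero, mul_add, add_mul, mul_one, one_mul, mul_smul_comm, smul_mul_assoc,
    smul_sub]
  constructor <;> intro h <;> rw [← h] <;> abel

def Mty.odd : Matrix (Fin 4) (Fin 4) ℂ :=
  !![0, 1, -1, 0; 0, 0, 0, 1; 0, 0, 0, -1; 0, 0, 0, 0]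

theorem Mty.odd_ne_zero : Mty.odd ≠ 0 := fun h => by
  simpa [Mty.odd] using congrFun (congrFun h 0) 1

theorem Mty_neg_sub_Mty (s u : ℂ) : Mty s (-u) - Mty s u = (2 * u) • Mty.odd := by
  ext i j
  fin_cases i <;> fin_cases j <;> simp [Mty, Mty.odd] <;> ring

theorem Mty_neg_mul_sub_mul_Mty (s u : ℂ) :
    Mty s (-u) * !![0, 0, 0, 0; 0, -1, 1, 0; 0, 1, -1, 0; 0, 0, 0, 0] -
        !![0, 0, 0, 0; 0, -1, 1, 0; 0, 1, -1, 0; 0, 0, 0, 0] * Mty s u =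
      ((u - 1) ^ 2 - s ^ 2) • Mty.odd := by
  ext i j
  fin_cases i <;> fin_cases j <;> simp [Mty, Mty.odd] <;> ring

/-- The K-matrix `I₄ + k·(−E₂₂ + E₂₃ + E₃₂ − E₃₃)` intertwines the level-two
twisted Yangian generator iff `k = 2u/(s² − (u−1)²)`. -/
theorem stmt11 (u s k : ℂ) (hs : s ^ 2 ≠ (u - 1) ^ 2) :
    Mty s (-u) * (1 + k • !![0, 0, 0, 0; 0, -1, 1, 0; 0, 1, -1, 0; 0, 0, 0, 0]) =
      (1 + k • !![0, 0, 0, 0; 0, -1, 1, 0; 0, 1, -1, 0; 0, 0, 0, 0]) * Mty s u ↔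
      k = 2 * u / (s ^ 2 - (u - 1) ^ 2) := by
  rw [mul_one_add_smul_eq_one_add_smul_mul_iff, Mty_neg_sub_Mty, Mty_neg_mul_sub_mul_Mty,
    smul_smul, ← add_smul, smul_eq_zero, or_iff_left Mty.odd_ne_zero,
    eq_div_iff (sub_ne_zero.mpr hs)]
  constructor <;> intro h <;> linear_combination -h
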